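/- Let E be a positive semidefinite 4×4 Hermitian matrix satisfying the orthogonality-preservation conditions for the Bell-state set {|ψ_{00}⟩, |ψ_{11}⟩, |ψ_{31}⟩, |ψ_{32}⟩} (so E has the five-parameter form with parameters a_0, a_1, a_2, b_0, b_2). Then the eigenvalues of the normalized average Bob-side state ρ_B = (1/Tr(E)) Σ_{i=1}^{4} (1/4)·Tr_A((√E ⊗ I)|ψ_i⟩⟨ψ_i|(√E ⊗ I)) are (1 ± μ_0/(2a_0))/4 and (1 ± μ_1/(2a_0))/4, where μ_0 = √((a_1+a_2)²+(b_0+b_2)²) and μ_1 = √((a_1−a_2)²+(b_0−b_2)²) and a_0 = Tr(E)/4. -/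

import Mathlib

/-!
Only `√E * √E = E` enters: on Alice's factor, `Tr_A((S ⊗ 1)|ψ⟩⟨ψ|(T ⊗ 1))` depends on `S` and `T`
only through `T * S`. Each `ψ_{nm}` is supported on the pairs `(p, p + m)`, so the partial traces
collapse to single entries of `E` twisted by powers of `i`; summed over the four Bell states, these
give a `ρ_B` coupling only basis vectors of equal parity. It therefore splits into two `2 × 2`
blocks `1/4 + [[-γ, β], [β, γ]]`, with eigenvalues `1/4 ± √(γ² + β²)`.
-/

open Matrix Polynomial
open scoped Kronecker ComplexOrder

/-- The generalized Bell state `|ψ_{nm}⟩ = (1/√d) ∑_j e^{2πijn/d} |j⟩ ⊗ |j ⊕_d m⟩`. -/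
noncomputable def bell (d : ℕ) (n m : Fin d) : Fin d × Fin d → ℂ :=
  fun p => (1 / Real.sqrt d) *
    Complex.exp (2 * Real.pi * Complex.I * (p.1 : ℕ) * (n : ℕ) / d) *
    (if p.2 = p.1 + m then 1 else 0)

/-- The rank-one projection `|ψ⟩⟨ψ|`. -/
noncomputable def outer {ι : Type*} (ψ : ι → ℂ) : Matrix ι ι ℂ :=
  Matrix.of fun p q => ψ p * star (ψ q)

/-- Partial trace over the first (Alice's) tensor factor. -/
noncomputable def trA {d : ℕ} (ρ : Matrix (Fin d × Fin d) (Fin d × Fin d) ℂ) :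
    Matrix (Fin d) (Fin d) ℂ :=
  Matrix.of fun i j => ∑ k : Fin d, ρ (k, i) (k, j)

/-- The indices of the four Bell states `ψ_{00}, ψ_{11}, ψ_{31}, ψ_{32}`. -/
def bellIdx : Fin 4 → Fin 4 × Fin 4 := ![(0, 0), (1, 1), (3, 1), (3, 2)]

/-- The five-parameter effect operator arising from orthogonality preservation. -/
noncomputable def fiveParam (a0 a1 a2 b0 b2 : ℝ) : Matrix (Fin 4) (Fin 4) ℂ :=
  !![((a0 + a1 + a2 : ℝ) : ℂ), 0, ((b0 + b2 : ℝ) : ℂ), 0;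
     0, ((a0 + a1 - a2 : ℝ) : ℂ), 0, ((b0 - b2 : ℝ) : ℂ);
     ((b0 + b2 : ℝ) : ℂ), 0, ((a0 - a1 - a2 : ℝ) : ℂ), 0;
     0, ((b0 - b2 : ℝ) : ℂ), 0, ((a0 - a1 + a2 : ℝ) : ℂ)]

/-- The positive semidefinite square root (as defined in the older Mathlib). -/
noncomputable def Matrix.PosSemidef.sqrt {n 𝕜 : Type*} [Fintype n] [DecidableEq n] [RCLike 𝕜]
    {A : Matrix n n 𝕜} (hA : A.PosSemidef) : Matrix n n 𝕜 :=
  hA.1.eigenvectorUnitary.1 * diagonal ((↑) ∘ (√·) ∘ hA.1.eigenvalues) *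
    (star hA.1.eigenvectorUnitary : Matrix n n 𝕜)

/-- The average Bob-side post-measurement state, normalized to trace one:
`ρ_B = (Tr E)⁻¹ ∑ᵢ Tr_A((√E ⊗ I)|ψᵢ⟩⟨ψᵢ|(√E ⊗ I))`. -/
noncomputable def rhoB (E : Matrix (Fin 4) (Fin 4) ℂ) (hE : E.PosSemidef) :
    Matrix (Fin 4) (Fin 4) ℂ :=
  (E.trace)⁻¹ • ∑ i : Fin 4,
    trA ((hE.sqrt ⊗ₖ (1 : Matrix (Fin 4) (Fin 4) ℂ)) *
      outer (bell 4 (bellIdx i).1 (bellIdx i).2) *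
      (hE.sqrt ⊗ₖ (1 : Matrix (Fin 4) (Fin 4) ℂ)))

lemma Matrix.PosSemidef.sqrt_mul_self {n 𝕜 : Type*} [Fintype n] [DecidableEq n] [RCLike 𝕜]
    {A : Matrix n n 𝕜} (hA : A.PosSemidef) : hA.sqrt * hA.sqrt = A := by
  set U : Matrix n n 𝕜 := (hA.1.eigenvectorUnitary : Matrix n n 𝕜)
  set D : Matrix n n 𝕜 := diagonal ((↑) ∘ (√·) ∘ hA.1.eigenvalues)
  have hUU : star U * U = 1 := Unitary.coe_star_mul_self _
  have hDD : D * D = diagonal ((↑) ∘ hA.1.eigenvalues) := by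
    rw [diagonal_mul_diagonal]
    congr 1
    funext i
    simp [← RCLike.ofReal_mul, Real.mul_self_sqrt (hA.eigenvalues_nonneg i)]
  calc hA.sqrt * hA.sqrt = U * (D * (star U * U) * D) * star U := by
        simp only [Matrix.PosSemidef.sqrt, U, D, Matrix.mul_assoc]
    _ = A := by
        rw [hUU, Matrix.mul_one, hDD]
        conv_rhs => rw [hA.1.spectral_theorem, Unitary.conjStarAlgAut_apply]

lemma trA_kronecker_one_mul_outer_mul {d : ℕ} (S T : Matrix (Fin d) (Fin d) ℂ)
    (ψ : Fin d × Fin d → ℂ) (i j : Fin d) :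
    trA ((S ⊗ₖ 1) * outer ψ * (T ⊗ₖ 1)) i j
      = ∑ p, ∑ q, (T * S) q p * ψ (p, i) * star (ψ (q, j)) := by
  simp only [trA, Matrix.of_apply, Matrix.mul_apply, outer, Matrix.kroneckerMap_apply,
    Matrix.one_apply, Fintype.sum_prod_type, mul_ite, mul_one, mul_zero, ite_mul, zero_mul,
    Finset.sum_ite_eq, Finset.sum_ite_eq', Finset.mem_univ, if_true,
    Finset.sum_mul]
  rw [Finset.sum_comm, Finset.sum_congr rfl fun _ _ => Finset.sum_comm, Finset.sum_comm]
  exact Finset.sum_congr rfl fun p _ => Finset.sum_congr rfl fun q _ =>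
    Finset.sum_congr rfl fun k _ => by ring

lemma bell_eq_zero {d : ℕ} [NeZero d] {n m : Fin d} {p i : Fin d} (h : p ≠ i - m) :
    bell d n m (p, i) = 0 := by
  have : i ≠ p + m := fun h' => h (eq_sub_of_add_eq h'.symm)
  simp [bell, this]

lemma sum_mul_bell_mul_star_bell {d : ℕ} [NeZero d] (A : Matrix (Fin d) (Fin d) ℂ)
    (n m i j : Fin d) :
    ∑ p, ∑ q, A q p * bell d n m (p, i) * star (bell d n m (q, j))
      = A (j - m) (i - m) * bell d n m (i - m, i) * star (bell d n m (j - m, j)) := by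
  rw [Fintype.sum_eq_single (i - m) fun p hp => by simp [bell_eq_zero hp],
    Fintype.sum_eq_single (j - m) fun q hq => by simp [bell_eq_zero hq]]

lemma bell_four_apply_sub (n m i : Fin 4) :
    bell 4 n m (i - m, i) = (1 / 2 : ℂ) * Complex.I ^ (((i - m : Fin 4) : ℕ) * (n : ℕ)) := by
  have hsqrt : √((4 : ℕ) : ℝ) = 2 := by
    rw [show ((4 : ℕ) : ℝ) = 2 ^ 2 by norm_num, Real.sqrt_sq zero_le_two]
  have hexp : ∀ k : ℕ, Complex.exp (2 * Real.pi * Complex.I * k / (4 : ℕ)) = Complex.I ^ k := by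
    intro k
    conv_rhs => rw [← Complex.exp_pi_div_two_mul_I, ← Complex.exp_nat_mul]
    congr 1
    push_cast
    ring
  simp only [bell, sub_add_cancel, if_true, mul_one, hsqrt]
  rw [← hexp]
  push_cast
  ring_nf

lemma trace_fiveParam (a0 a1 a2 b0 b2 : ℝ) : (fiveParam a0 a1 a2 b0 b2).trace = 4 * a0 := by
  simp [Matrix.trace, fiveParam, Fin.sum_univ_four]
  ring

lemma rhoB_fiveParam {a0 a1 a2 b0 b2 : ℝ} (ha0 : a0 ≠ 0)
    (hE : (fiveParam a0 a1 a2 b0 b2).PosSemidef) :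
    rhoB (fiveParam a0 a1 a2 b0 b2) hE =
      !![(1 / 4 - (a1 - a2) / (8 * a0) : ℂ), 0, -(b0 - b2) / (8 * a0), 0;
         0, 1 / 4 - -(a1 + a2) / (8 * a0), 0, -(b0 + b2) / (8 * a0);
         -(b0 - b2) / (8 * a0), 0, 1 / 4 + (a1 - a2) / (8 * a0), 0;
         0, -(b0 + b2) / (8 * a0), 0, 1 / 4 + -(a1 + a2) / (8 * a0)] := by
  have ha0' : (a0 : ℂ) ≠ 0 := Complex.ofReal_ne_zero.mpr ha0
  ext i j
  rw [rhoB, trace_fiveParam, Matrix.smul_apply, Matrix.sum_apply]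
  simp only [trA_kronecker_one_mul_outer_mul, hE.sqrt_mul_self, sum_mul_bell_mul_star_bell,
    bell_four_apply_sub]
  simp only [Fin.sum_univ_four, bellIdx, cons_val_zero, cons_val_one, cons_val_two,
    cons_val_three, head_cons, tail_cons, smul_eq_mul]
  fin_cases i <;> fin_cases j <;>
    simp [fiveParam, show (-1 : Fin 4) = 3 by decide, show (-2 : Fin 4) = 2 by decide,
      show (2 - 1 : Fin 4) = 1 by decide, show (3 - 1 : Fin 4) = 2 by decide,
      show (3 - 2 : Fin 4) = 1 by decide, pow_succ, Complex.conj_I] <;>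
    (field_simp; ring_nf; simp only [Complex.I_sq]; ring)

lemma charpoly_fin_four_checkerboard {R : Type*} [CommRing R]
    (p q q' t r s s' u : R) :
    (!![p, 0, q, 0; 0, r, 0, s; q', 0, t, 0; 0, s', 0, u]).charpoly =
      (!![p, q; q', t]).charpoly * (!![r, s; s', u]).charpoly := by
  let e : Fin 2 ⊕ Fin 2 ≃ Fin 4 :=
    { toFun := Sum.elim ![0, 2] ![1, 3]
      invFun := ![.inl 0, .inr 0, .inl 1, .inr 1]
      left_inv := by decide
      right_inv := by decide }
  have hblocks : reindex e e (fromBlocks !![p, q; q', t] 0 0 !![r, s; s', u]) =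
      !![p, 0, q, 0; 0, r, 0, s; q', 0, t, 0; 0, s', 0, u] := by
    ext i j
    fin_cases i <;> fin_cases j <;> rfl
  rw [← hblocks, charpoly_reindex, charpoly_fromBlocks_zero₁₂]

lemma charpoly_fin_two_of_sq_eq {R : Type*} [CommRing R] [Nontrivial R] (α β γ s : R)
    (hs : s ^ 2 = γ ^ 2 + β ^ 2) :
    (!![α - γ, β; β, α + γ]).charpoly = (X - C (α + s)) * (X - C (α - s)) := by
  rw [charpoly_fin_two, trace_fin_two_of, det_fin_two_of]
  have hdet : (α - γ) * (α + γ) - β * β = (α + s) * (α - s) := by linear_combination hs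
  rw [hdet, show α - γ + (α + γ) = (α + s) + (α - s) by ring]
  simp only [C_add, C_mul]
  ring

lemma ofReal_sqrt_sq_add_sq_sq (x y : ℝ) :
    ((√(x ^ 2 + y ^ 2) : ℝ) : ℂ) ^ 2 = (x : ℂ) ^ 2 + (y : ℂ) ^ 2 := by
  rw [← Complex.ofReal_pow, Real.sq_sqrt (by positivity)]
  push_cast
  ring

theorem rhoB_eigenvalues_general (a0 a1 a2 b0 b2 : ℝ) (ha0 : 0 < a0)
    (hE : (fiveParam a0 a1 a2 b0 b2).PosSemidef) :
    (rhoB (fiveParam a0 a1 a2 b0 b2) hE).charpoly =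
      (X - C (((1 + Real.sqrt ((a1 + a2) ^ 2 + (b0 + b2) ^ 2) / (2 * a0)) / 4 : ℝ) : ℂ)) *
      (X - C (((1 - Real.sqrt ((a1 + a2) ^ 2 + (b0 + b2) ^ 2) / (2 * a0)) / 4 : ℝ) : ℂ)) *
      (X - C (((1 + Real.sqrt ((a1 - a2) ^ 2 + (b0 - b2) ^ 2) / (2 * a0)) / 4 : ℝ) : ℂ)) *
      (X - C (((1 - Real.sqrt ((a1 - a2) ^ 2 + (b0 - b2) ^ 2) / (2 * a0)) / 4 : ℝ) : ℂ)) := by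
  have ha0' : (a0 : ℂ) ≠ 0 := Complex.ofReal_ne_zero.mpr ha0.ne'
  have hroot (μ : ℝ) : (((1 + μ / (2 * a0)) / 4 : ℝ) : ℂ) = 1 / 4 + μ / (8 * a0) ∧
      (((1 - μ / (2 * a0)) / 4 : ℝ) : ℂ) = 1 / 4 - μ / (8 * a0) := by
    constructor <;> push_cast <;> field_simp <;> ring
  rw [rhoB_fiveParam ha0.ne' hE, charpoly_fin_four_checkerboard,
    charpoly_fin_two_of_sq_eq (s := (√((a1 - a2) ^ 2 + (b0 - b2) ^ 2) : ℂ) / (8 * a0)),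
    charpoly_fin_two_of_sq_eq (s := (√((a1 + a2) ^ 2 + (b0 + b2) ^ 2) : ℂ) / (8 * a0))]
  · simp only [hroot]
    ring
  all_goals rw [div_pow, ofReal_sqrt_sq_add_sq_sq]; push_cast; ring

/-- The eigenvalues of the normalized average Bob-side state `ρ_B` are
`(1 ± μ₀/(2a₀))/4` and `(1 ± μ₁/(2a₀))/4`, where
`μ₀ = √((a₁+a₂)²+(b₀+b₂)²)`, `μ₁ = √((a₁−a₂)²+(b₀−b₂)²)` and `a₀ = Tr(E)/4`. -/
theorem rhoB_eigenvalues (a0 a1 a2 b0 b2 : ℝ) (ha0 : 0 < a0)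
    (hμ0 : Real.sqrt ((a1 + a2) ^ 2 + (b0 + b2) ^ 2) ≤ a0)
    (hμ1 : Real.sqrt ((a1 - a2) ^ 2 + (b0 - b2) ^ 2) ≤ a0)
    (hE : (fiveParam a0 a1 a2 b0 b2).PosSemidef) :
    (rhoB (fiveParam a0 a1 a2 b0 b2) hE).charpoly =
      (X - C (((1 + Real.sqrt ((a1 + a2) ^ 2 + (b0 + b2) ^ 2) / (2 * a0)) / 4 : ℝ) : ℂ)) *
      (X - C (((1 - Real.sqrt ((a1 + a2) ^ 2 + (b0 + b2) ^ 2) / (2 * a0)) / 4 : ℝ) : ℂ)) *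
      (X - C (((1 + Real.sqrt ((a1 - a2) ^ 2 + (b0 - b2) ^ 2) / (2 * a0)) / 4 : ℝ) : ℂ)) *
      (X - C (((1 - Real.sqrt ((a1 - a2) ^ 2 + (b0 - b2) ^ 2) / (2 * a0)) / 4 : ℝ) : ℂ)) :=
  rhoB_eigenvalues_general a0 a1 a2 b0 b2 ha0 hE
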